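/- Let U be a continuous unitary representation of G₀ on a complex Hilbert space H. Assume the spectral condition: for every M ∈ C₊, every Ψ ∈ H, and every C^∞ function φ̃ : ℝ → ℂ with compact support contained in (−∞, 0), the Bochner integral ∫_ℝ φ(t) U(exp(tM))Ψ dt equals 0, where φ(t) := ∫_ℝ φ̃(p) e^{−itp} dp. Then for every Q ∈ Γ₊ := {ℓ(a∧b) : a,b ∈ ℝ^{d+1}, ⟨a,a⟩ = 1, ⟨b,b⟩ = ⟨a,b⟩ = 0, a⁰b^d − a^d b⁰ > 0}, every Ψ ∈ H, and every such φ̃, one also has ∫_ℝ φ(t) U(exp(tQ))Ψ dt = 0. -/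

import Mathlib

noncomputable section
open Matrix Complex

namespace AdS

/-- The metric signs: +1 for indices 0 and d, −1 otherwise. -/
def eta (d : ℕ) (μ : Fin (d+1)) : ℝ := if μ = 0 ∨ μ = Fin.last d then 1 else -1

/-- The AdS bilinear form on ℝ^{d+1}. -/
def formR (d : ℕ) (x y : Fin (d+1) → ℝ) : ℝ := ∑ μ, eta d μ * x μ * y μ

/-- The ℂ-bilinear extension of the AdS form to ℂ^{d+1}. -/
def formC (d : ℕ) (z w : Fin (d+1) → ℂ) : ℂ := ∑ μ, (eta d μ : ℂ) * z μ * w μ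

/-- The real AdS quadric. -/
def Xd (d : ℕ) : Set (Fin (d+1) → ℝ) := {x | formR d x x = 1}

/-- The complex AdS quadric. -/
def XdC (d : ℕ) : Set (Fin (d+1) → ℂ) := {z | formC d z z = 1}

/-- ℓ(a∧b) : x ↦ ⟨b,x⟩a − ⟨a,x⟩b as a matrix. -/
def ell (d : ℕ) (a b : Fin (d+1) → ℝ) : Matrix (Fin (d+1)) (Fin (d+1)) ℝ :=
  Matrix.of fun i j => eta d j * (b j * a i - a j * b i)

/-- The AdS group. -/
def Ggrp (d : ℕ) : Set (Matrix (Fin (d+1)) (Fin (d+1)) ℝ) :=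
  {Λ | ∀ x y, formR d (Λ.mulVec x) (Λ.mulVec y) = formR d x y}

/-- The connected component of the identity of the AdS group. -/
def G0 (d : ℕ) : Set (Matrix (Fin (d+1)) (Fin (d+1)) ℝ) :=
  connectedComponentIn (Ggrp d) 1

/-- The set C₁ of Lie algebra generators. -/
def C1 (d : ℕ) : Set (Matrix (Fin (d+1)) (Fin (d+1)) ℝ) :=
  {M | ∃ a b : Fin (d+1) → ℝ, formR d a a = 1 ∧ formR d b b = 1 ∧ formR d a b = 0 ∧
    0 < a 0 * b (Fin.last d) - a (Fin.last d) * b 0 ∧ M = ell d a b}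

/-- The cone C₊ generated by C₁. -/
def Cplus (d : ℕ) : Set (Matrix (Fin (d+1)) (Fin (d+1)) ℝ) :=
  {M | ∃ ρ : ℝ, 0 < ρ ∧ ∃ N ∈ C1 d, M = ρ • N}

/-- A real matrix viewed as a complex one. -/
def toC (d : ℕ) (M : Matrix (Fin (d+1)) (Fin (d+1)) ℝ) : Matrix (Fin (d+1)) (Fin (d+1)) ℂ :=
  M.map Complex.ofReal

/-- A real vector viewed as a complex one. -/
def toCv (d : ℕ) (x : Fin (d+1) → ℝ) : Fin (d+1) → ℂ := fun μ => (x μ : ℂ)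

/-- The generator M₀d = ℓ(e₀ ∧ e_d). -/
def M0d (d : ℕ) : Matrix (Fin (d+1)) (Fin (d+1)) ℝ :=
  ell d (Pi.single 0 1) (Pi.single (Fin.last d) 1)

/-- The future tuboid Z₁₊ of the complex AdS quadric. -/
def Z1plus (d : ℕ) : Set (Fin (d+1) → ℂ) :=
  {z | ∃ M ∈ C1 d, ∃ c ∈ Xd d, ∃ τ : ℂ, 0 < τ.im ∧
    z = (NormedSpace.exp (τ • toC d M)).mulVec (toCv d c)}

/-- The past tuboid Z₁₋ of the complex AdS quadric. -/
def Z1minus (d : ℕ) : Set (Fin (d+1) → ℂ) :=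
  {z | ∃ M ∈ C1 d, ∃ c ∈ Xd d, ∃ τ : ℂ, τ.im < 0 ∧
    z = (NormedSpace.exp (τ • toC d M)).mulVec (toCv d c)}
open MeasureTheory

/-- The set Γ₊ = {ℓ(a∧b) : ⟨a,a⟩ = 1, ⟨b,b⟩ = ⟨a,b⟩ = 0, a⁰b^d − a^d b⁰ > 0}. -/
def GammaPlus (d : ℕ) : Set (Matrix (Fin (d+1)) (Fin (d+1)) ℝ) :=
  {Q | ∃ a b : Fin (d+1) → ℝ, formR d a a = 1 ∧ formR d b b = 0 ∧ formR d a b = 0 ∧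
    0 < a 0 * b (Fin.last d) - a (Fin.last d) * b 0 ∧ Q = ell d a b}

section AuxAdS
open MeasureTheory

abbrev Dm (d : ℕ) : Matrix (Fin (d+1)) (Fin (d+1)) ℝ := Matrix.diagonal (eta d)

lemma eta_sq (d : ℕ) (μ : Fin (d+1)) : eta d μ * eta d μ = 1 := by
  unfold eta; split <;> norm_num

lemma eta_ne_zero (d : ℕ) (μ : Fin (d+1)) : eta d μ ≠ 0 := by
  unfold eta; split <;> norm_num

lemma Dm_mul_Dm (d : ℕ) : Dm d * Dm d = 1 := by
  rw [Matrix.diagonal_mul_diagonal]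
  ext i j
  by_cases h : i = j <;> simp [h, Matrix.diagonal, eta_sq, Matrix.one_apply]

lemma formR_eq_dot (d : ℕ) (x y : Fin (d+1) → ℝ) :
    formR d x y = x ⬝ᵥ ((Dm d).mulVec y) := by
  unfold formR dotProduct
  refine Finset.sum_congr rfl fun μ _ => ?_
  rw [Matrix.mulVec_diagonal]
  ring

lemma mem_Ggrp_of (d : ℕ) (Λ : Matrix (Fin (d+1)) (Fin (d+1)) ℝ)
    (h : Λᵀ * Dm d * Λ = Dm d) : Λ ∈ Ggrp d := by
  intro x y
  rw [formR_eq_dot, formR_eq_dot]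
  rw [Matrix.mulVec_mulVec, ← Matrix.vecMul_transpose Λ x, Matrix.dotProduct_mulVec,
    Matrix.vecMul_vecMul, ← mul_assoc, h, Matrix.dotProduct_mulVec]

lemma ell_transpose (d : ℕ) (a b : Fin (d+1) → ℝ) :
    (ell d a b)ᵀ = Dm d * (-(ell d a b)) * Dm d := by
  ext i j
  simp only [Matrix.transpose_apply, Matrix.mul_diagonal, Matrix.diagonal_mul,
    Matrix.neg_apply, ell, Matrix.of_apply]
  linear_combination (eta d i * (b j * a i - a j * b i)) * eta_sq d j

lemma ell_smul_right (d : ℕ) (a b : Fin (d+1) → ℝ) (r : ℝ) :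
    ell d a (r • b) = r • ell d a b := by
  ext i j
  simp only [ell, Matrix.of_apply, Matrix.smul_apply, Pi.smul_apply, smul_eq_mul]
  ring

lemma ell_add_right (d : ℕ) (a b c : Fin (d+1) → ℝ) :
    ell d a (b + c) = ell d a b + ell d a c := by
  ext i j
  simp only [ell, Matrix.of_apply, Matrix.add_apply, Pi.add_apply]
  ring

lemma isUnit_Dm (d : ℕ) : IsUnit (Dm d) := ⟨⟨Dm d, Dm d, Dm_mul_Dm d, Dm_mul_Dm d⟩, rfl⟩

lemma Dm_inv (d : ℕ) : (Dm d)⁻¹ = Dm d := Matrix.inv_eq_right_inv (Dm_mul_Dm d)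

lemma exp_ell_mem_Ggrp (d : ℕ) (a b : Fin (d+1) → ℝ) :
    NormedSpace.exp (ell d a b) ∈ Ggrp d := by
  apply mem_Ggrp_of
  have h1 : (NormedSpace.exp (ell d a b))ᵀ = NormedSpace.exp ((ell d a b)ᵀ) :=
    (Matrix.exp_transpose _).symm
  have hDinv : Dm d * (-(ell d a b)) * Dm d = Dm d * (-(ell d a b)) * (Dm d)⁻¹ := by
    rw [Dm_inv]
  rw [h1, ell_transpose, hDinv, Matrix.exp_conj _ _ (isUnit_Dm d), Dm_inv]
  have h2 : NormedSpace.exp (-(ell d a b)) * NormedSpace.exp (ell d a b) = 1 := by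
    rw [← Matrix.exp_add_of_commute _ _ ((Commute.refl (ell d a b)).neg_left),
      neg_add_cancel, NormedSpace.exp_zero]
  calc Dm d * NormedSpace.exp (-(ell d a b)) * Dm d * Dm d * NormedSpace.exp (ell d a b)
      = Dm d * NormedSpace.exp (-(ell d a b)) * (Dm d * Dm d) * NormedSpace.exp (ell d a b) := by
        rw [mul_assoc (Dm d * NormedSpace.exp (-(ell d a b)))]
    _ = Dm d := by rw [Dm_mul_Dm, mul_one, mul_assoc, h2, mul_one]

lemma exp_continuous_matrix (d : ℕ) :
    Continuous (NormedSpace.exp : Matrix (Fin (d+1)) (Fin (d+1)) ℝ → _) := by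
  letI : SeminormedRing (Matrix (Fin (d+1)) (Fin (d+1)) ℝ) := Matrix.linftyOpSemiNormedRing
  letI : NormedRing (Matrix (Fin (d+1)) (Fin (d+1)) ℝ) := Matrix.linftyOpNormedRing
  letI : NormedAlgebra ℝ (Matrix (Fin (d+1)) (Fin (d+1)) ℝ) := Matrix.linftyOpNormedAlgebra
  letI : NormedAlgebra ℚ (Matrix (Fin (d+1)) (Fin (d+1)) ℝ) := NormedAlgebra.restrictScalars ℚ ℝ _
  exact NormedSpace.exp_continuous

lemma exp_ell_mem_G0 (d : ℕ) (a b : Fin (d+1) → ℝ) :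
    NormedSpace.exp (ell d a b) ∈ G0 d := by
  have hcont : Continuous fun s : ℝ => NormedSpace.exp (s • ell d a b) :=
    (exp_continuous_matrix d).comp (continuous_id.smul continuous_const)
  have hsub : (Set.range fun s : ℝ => NormedSpace.exp (s • ell d a b)) ⊆ Ggrp d := by
    rintro _ ⟨s, rfl⟩
    dsimp only
    rw [← ell_smul_right]
    exact exp_ell_mem_Ggrp d a (s • b)
  have hpre : IsPreconnected (Set.range fun s : ℝ => NormedSpace.exp (s • ell d a b)) :=
    isPreconnected_range hcont
  have h1 : (1 : Matrix (Fin (d+1)) (Fin (d+1)) ℝ) ∈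
      Set.range fun s : ℝ => NormedSpace.exp (s • ell d a b) :=
    ⟨0, by simp [NormedSpace.exp_zero]⟩
  have := hpre.subset_connectedComponentIn h1 hsub
  exact this ⟨1, by simp⟩

lemma formR_add_right (d : ℕ) (x y z : Fin (d+1) → ℝ) :
    formR d x (y + z) = formR d x y + formR d x z := by
  unfold formR
  rw [← Finset.sum_add_distrib]
  exact Finset.sum_congr rfl fun μ _ => by simp [Pi.add_apply]; ring

lemma formR_smul_right (d : ℕ) (x y : Fin (d+1) → ℝ) (r : ℝ) :
    formR d x (r • y) = r * formR d x y := by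
  unfold formR
  rw [Finset.mul_sum]
  exact Finset.sum_congr rfl fun μ _ => by simp [Pi.smul_apply]; ring

lemma formR_symm (d : ℕ) (x y : Fin (d+1) → ℝ) : formR d x y = formR d y x :=
  Finset.sum_congr rfl fun μ _ => by ring

lemma formR_expand (d : ℕ) (x y : Fin (d+1) → ℝ) (ε : ℝ) :
    formR d (x + ε • y) (x + ε • y) =
      formR d x x + 2 * ε * formR d x y + ε * ε * formR d y y := by
  unfold formR
  simp only [Pi.add_apply, Pi.smul_apply, smul_eq_mul]
  rw [Finset.mul_sum, Finset.mul_sum, ← Finset.sum_add_distrib, ← Finset.sum_add_distrib]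
  exact Finset.sum_congr rfl fun μ _ => by ring

/-- Construction of a Schwartz map from a smooth compactly supported function. -/
def toSchwartz (f : ℝ → ℂ) (h1 : ContDiff ℝ (⊤ : ℕ∞) f) (h2 : HasCompactSupport f) :
    SchwartzMap ℝ ℂ where
  toFun := f
  smooth' := h1.of_le (by simp)
  decay' := by
    intro k n
    obtain ⟨C, hC⟩ := (((continuous_norm.pow k).mul
      ((h1.of_le (m := ((⊤ : ℕ∞) : WithTop ℕ∞)) le_rfl).continuous_iteratedFDeriv (by exact_mod_cast le_top)).norm)).bounded_above_of_compact_support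
      (((h2.iteratedFDeriv n).norm).mul_left)
    exact ⟨C, fun x => (Real.le_norm_self _).trans (hC x)⟩

lemma phihat_eq_fourier (f : ℝ → ℂ) (h1 : ContDiff ℝ (⊤ : ℕ∞) f) (h2 : HasCompactSupport f) (t : ℝ) :
    (∫ p : ℝ, f p * Complex.exp (-((t : ℂ) * (p : ℂ)) * Complex.I)) =
      (SchwartzMap.fourierTransformCLM ℂ (toSchwartz f h1 h2)) (t / (2 * Real.pi)) := by
  rw [SchwartzMap.fourierTransformCLM_apply, SchwartzMap.fourier_coe, Real.fourier_eq']
  apply integral_congr_ae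
  filter_upwards with p
  simp only [RCLike.inner_apply, conj_trivial, smul_eq_mul]
  rw [mul_comm]
  congr 1
  have hπc : (Real.pi : ℂ) ≠ 0 := Complex.ofReal_ne_zero.mpr Real.pi_ne_zero
  push_cast
  field_simp

end AuxAdS


/-- the spectral condition for all generators in `C₊` implies the
spectral condition for all generators in `Γ₊`. -/
theorem spectral_condition_limit
    (d : ℕ) (hd : 2 ≤ d)
    (H : Type*) [NormedAddCommGroup H] [InnerProductSpace ℂ H] [CompleteSpace H]
    (U : Matrix (Fin (d+1)) (Fin (d+1)) ℝ → (H ≃ₗᵢ[ℂ] H))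
    (hmul : ∀ Λ₁ ∈ G0 d, ∀ Λ₂ ∈ G0 d, ∀ ψ : H, U (Λ₁ * Λ₂) ψ = U Λ₁ (U Λ₂ ψ))
    (hcont : ContinuousOn
      (fun p : Matrix (Fin (d+1)) (Fin (d+1)) ℝ × H => (U p.1) p.2)
      ((G0 d) ×ˢ (Set.univ : Set H)))
    (hspec : ∀ M ∈ Cplus d, ∀ Ψ : H, ∀ φt : ℝ → ℂ,
      ContDiff ℝ (⊤ : ℕ∞) φt → HasCompactSupport φt → tsupport φt ⊆ Set.Iio 0 →
      (∫ t : ℝ, (∫ p : ℝ, φt p * Complex.exp (-((t : ℂ) * (p : ℂ)) * Complex.I)) •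
        ((U (NormedSpace.exp (t • M))) Ψ)) = 0) :
    ∀ Q ∈ GammaPlus d, ∀ Ψ : H, ∀ φt : ℝ → ℂ,
      ContDiff ℝ (⊤ : ℕ∞) φt → HasCompactSupport φt → tsupport φt ⊆ Set.Iio 0 →
      (∫ t : ℝ, (∫ p : ℝ, φt p * Complex.exp (-((t : ℂ) * (p : ℂ)) * Complex.I)) •
        ((U (NormedSpace.exp (t • Q))) Ψ)) = 0 := by
  intro Q hQ Ψ φt hsm hcs hsupp
  obtain ⟨a, b, ha, hb, hab, hpos, rfl⟩ := hQ
  -- auxiliary vector v with ⟨a,v⟩ = 0 and ⟨b,v⟩ > 0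
  set w : Fin (d+1) → ℝ := fun μ => eta d μ * b μ with hw
  set v : Fin (d+1) → ℝ := w + (-(formR d a w)) • a with hv
  have hba : formR d b a = 0 := by rw [formR_symm]; exact hab
  have hav : formR d a v = 0 := by
    rw [hv, formR_add_right, formR_smul_right, ha]; ring
  have hbne : b ≠ 0 := by
    intro h
    rw [h] at hpos
    simp at hpos
  have hbw : 0 < formR d b w := by
    obtain ⟨μ₀, hμ₀⟩ : ∃ μ, b μ ≠ 0 := by
      by_contra hc
      push_neg at hc
      exact hbne (funext hc)
    have hwe : formR d b w = ∑ μ, (eta d μ * b μ) ^ 2 := by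
      unfold formR
      exact Finset.sum_congr rfl fun μ _ => by simp only [hw]; ring
    rw [hwe]
    apply Finset.sum_pos' (fun μ _ => sq_nonneg _)
    refine ⟨μ₀, Finset.mem_univ _, ?_⟩
    have h1 : eta d μ₀ * b μ₀ ≠ 0 := mul_ne_zero (eta_ne_zero d μ₀) hμ₀
    exact lt_of_le_of_ne (sq_nonneg _) (Ne.symm (pow_ne_zero 2 h1))
  have hbv : 0 < formR d b v := by
    rw [hv, formR_add_right, formR_smul_right, hba]
    simpa using hbw
  -- the positivity quantities
  set P : ℝ := a 0 * b (Fin.last d) - a (Fin.last d) * b 0 with hP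
  set P' : ℝ := a 0 * v (Fin.last d) - a (Fin.last d) * v 0 with hP'
  set VV : ℝ := formR d v v with hVV
  set ε₀ : ℝ := min (formR d b v / (1 + |VV|)) (P / (1 + |P'|)) with hε₀def
  have habs1 : (0:ℝ) < 1 + |VV| := by positivity
  have habs2 : (0:ℝ) < 1 + |P'| := by positivity
  have hε₀ : 0 < ε₀ := lt_min (div_pos hbv habs1) (div_pos hpos habs2)
  -- membership in Cplus for small ε
  have hkey : ∀ ε : ℝ, 0 < ε → ε < ε₀ → ell d a (b + ε • v) ∈ Cplus d := by
    intro ε hε hεlt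
    have hε1 : ε * (1 + |VV|) < formR d b v := by
      rw [← lt_div_iff₀ habs1]
      exact hεlt.trans_le (min_le_left _ _)
    have hε2 : ε * (1 + |P'|) < P := by
      rw [← lt_div_iff₀ habs2]
      exact hεlt.trans_le (min_le_right _ _)
    set c : Fin (d+1) → ℝ := b + ε • v with hc
    have hcc : formR d c c = 2 * ε * formR d b v + ε * ε * VV := by
      rw [hc, hVV, formR_expand d b v ε, hb]
      ring
    have hccpos : 0 < formR d c c := by
      rw [hcc]
      nlinarith [abs_nonneg VV, le_abs_self VV, neg_abs_le VV, hε.le]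
    have hac : formR d a c = 0 := by
      rw [hc, formR_add_right, formR_smul_right, hab, hav]; ring
    have hcpos : 0 < a 0 * c (Fin.last d) - a (Fin.last d) * c 0 := by
      have : a 0 * c (Fin.last d) - a (Fin.last d) * c 0 = P + ε * P' := by
        rw [hc, hP, hP']
        simp [Pi.add_apply, Pi.smul_apply]
        ring
      rw [this]
      nlinarith [abs_nonneg P', le_abs_self P', neg_abs_le P', hε.le]
    set ρ : ℝ := Real.sqrt (formR d c c) with hρdef
    have hρ : 0 < ρ := Real.sqrt_pos.mpr hccpos
    have hρ2 : ρ * ρ = formR d c c := Real.mul_self_sqrt hccpos.le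
    refine ⟨ρ, hρ, ell d a (ρ⁻¹ • c), ⟨a, ρ⁻¹ • c, ha, ?_, ?_, ?_, rfl⟩, ?_⟩
    · rw [formR_smul_right, formR_symm d (ρ⁻¹ • c) c, formR_smul_right,
        formR_symm d c c, ← hρ2]
      field_simp
    · rw [formR_smul_right, hac]; ring
    · simp only [Pi.smul_apply, smul_eq_mul]
      have : a 0 * (ρ⁻¹ * c (Fin.last d)) - a (Fin.last d) * (ρ⁻¹ * c 0)
          = ρ⁻¹ * (a 0 * c (Fin.last d) - a (Fin.last d) * c 0) := by ring
      rw [this]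
      positivity
    · rw [ell_smul_right, smul_smul, mul_inv_cancel₀ hρ.ne', one_smul]
  -- the Schwartz function and its Fourier transform
  set g : SchwartzMap ℝ ℂ := SchwartzMap.fourierTransformCLM ℂ (toSchwartz φt hsm hcs) with hg
  have hφhat : ∀ t : ℝ, (∫ p : ℝ, φt p * Complex.exp (-((t : ℂ) * (p : ℂ)) * Complex.I))
      = g (t / (2 * Real.pi)) := fun t => phihat_eq_fourier φt hsm hcs t
  set K : Matrix (Fin (d+1)) (Fin (d+1)) ℝ := ell d a v with hK
  set F : ℝ → ℝ → H := fun ε t =>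
    (∫ p : ℝ, φt p * Complex.exp (-((t : ℂ) * (p : ℂ)) * Complex.I)) •
      ((U (NormedSpace.exp (t • (ell d a b + ε • K)))) Ψ) with hF
  -- membership of the relevant exponentials in G0
  have hexpG0 : ∀ (ε t : ℝ), NormedSpace.exp (t • (ell d a b + ε • K)) ∈ G0 d := by
    intro ε t
    have : t • (ell d a b + ε • K) = ell d a (t • (b + ε • v)) := by
      rw [hK, ← ell_smul_right, ← ell_add_right, ← ell_smul_right]
    rw [this]
    exact exp_ell_mem_G0 d a _
  -- continuity of the U part along any continuous family inside G0
  have hUc : ∀ (f : ℝ → Matrix (Fin (d+1)) (Fin (d+1)) ℝ), Continuous f →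
      (∀ s, f s ∈ G0 d) → Continuous fun s => (U (f s)) Ψ := by
    intro f hf hmem
    exact hcont.comp_continuous (hf.prodMk continuous_const)
      (fun s => Set.mk_mem_prod (hmem s) trivial)
  have hgc : Continuous fun t : ℝ => g (t / (2 * Real.pi)) :=
    g.continuous.comp (continuous_id.div_const _)
  have hφhatc : Continuous fun t : ℝ =>
      (∫ p : ℝ, φt p * Complex.exp (-((t : ℂ) * (p : ℂ)) * Complex.I)) := by
    have : (fun t : ℝ => (∫ p : ℝ, φt p * Complex.exp (-((t : ℂ) * (p : ℂ)) * Complex.I)))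
        = fun t : ℝ => g (t / (2 * Real.pi)) := funext hφhat
    rw [this]; exact hgc
  -- dominated convergence
  have hTend : Filter.Tendsto (fun ε => ∫ t : ℝ, F ε t) (nhdsWithin 0 (Set.Ioi 0))
      (nhds (∫ t : ℝ, F 0 t)) := by
    apply MeasureTheory.tendsto_integral_filter_of_dominated_convergence
      (fun t : ℝ => ‖g (t / (2 * Real.pi))‖ * ‖Ψ‖)
    · filter_upwards with ε
      apply Continuous.aestronglyMeasurable
      exact hφhatc.smul (hUc _ ((exp_continuous_matrix d).comp
        (continuous_id.smul continuous_const)) (hexpG0 ε))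
    · filter_upwards with ε
      filter_upwards with t
      rw [hF]
      simp only
      rw [norm_smul, LinearIsometryEquiv.norm_map, hφhat t]
    · exact ((g.integrable.norm.comp_div (by positivity : (2:ℝ) * Real.pi ≠ 0)).mul_const _)
    · filter_upwards with t
      have hc2 : Continuous fun ε : ℝ => F ε t := by
        rw [hF]
        apply Continuous.smul continuous_const
        exact hUc (fun ε => NormedSpace.exp (t • (ell d a b + ε • K)))
          ((exp_continuous_matrix d).comp
            ((continuous_const.add (continuous_id.smul continuous_const)).const_smul t))
          (fun ε => hexpG0 ε t)
      exact ((hc2.tendsto 0).mono_left nhdsWithin_le_nhds)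
  have hEv : (fun ε => ∫ t : ℝ, F ε t) =ᶠ[nhdsWithin 0 (Set.Ioi 0)] fun _ => 0 := by
    filter_upwards [Ioo_mem_nhdsGT hε₀] with ε hε
    have hmem := hkey ε hε.1 hε.2
    have heq : ell d a b + ε • K = ell d a (b + ε • v) := by
      rw [hK, ← ell_smul_right, ← ell_add_right]
    have := hspec _ hmem Ψ φt hsm hcs hsupp
    rw [hF]
    simp only
    rw [heq]
    exact this
  have h0 : Filter.Tendsto (fun ε => ∫ t : ℝ, F ε t) (nhdsWithin 0 (Set.Ioi 0))
      (nhds 0) := Filter.Tendsto.congr' hEv.symm tendsto_const_nhds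
  have hlim0 : (∫ t : ℝ, F 0 t) = 0 := tendsto_nhds_unique hTend h0
  have hF0 : (fun t : ℝ => F 0 t) = fun t : ℝ =>
      (∫ p : ℝ, φt p * Complex.exp (-((t : ℂ) * (p : ℂ)) * Complex.I)) •
        ((U (NormedSpace.exp (t • ell d a b))) Ψ) := by
    funext t
    rw [hF]
    simp only [zero_smul, add_zero]
  rw [hF0] at hlim0
  exact hlim0


end AdS
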